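/- arXiv:0901.4060 — 2 statements merged into one kernel-verified Lean document; each statement's English description precedes it below -/
import Mathlib

section
/- Let f be a Hecke-multiplicative function, x ≥ 1 real, p ≤ √x a prime, and define F(y) = (Σ_{n ≤ x/y} |f(n)|²) / (Σ_{n ≤ x} |f(n)|²), assuming Σ_{n ≤ x}|f(n)|² > 0. Then |f(p)| ≤ 2 / F(p²)^{1/4}, provided F(p²) > 0. -/
open Finset

def HeckeMult (f : ℕ → ℂ) : Prop :=
  f 1 = 1 ∧ ∀ m n : ℕ, 0 < m → 0 < n →
    f m * f n = ∑ d ∈ (Nat.gcd m n).divisors, f (m * n / d ^ 2)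

/-!
Two applications of the Hecke relation at a prime give
`f(p)² f(n) = f(p²n) + f(n) + [p ∣ n] f(n) + [p² ∣ n] f(n/p²)`.
By the triangle inequality and Cauchy–Schwarz,
`|f(p)|⁴ |f(n)|² ≤ 4 (|f(p²n)|² + 2|f(n)|² + [p² ∣ n] |f(n/p²)|²)`;
summing over `n ≤ x/p²`, each of the three sums on the right is at most `∑_{n ≤ x} |f(n)|²`,
so `|f(p)|⁴ F(p²) ≤ 16`.
-/

theorem Finset.sum_comp_le_sum_of_injOn {ι κ M : Type*} [AddCommMonoid M] [PartialOrder M]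
    [IsOrderedAddMonoid M] {s : Finset ι} {t : Finset κ} {g : κ → M} (e : ι → κ)
    (he : Set.InjOn e s) (hest : Set.MapsTo e s t) (hg : ∀ j ∈ t, 0 ≤ g j) :
    ∑ i ∈ s, g (e i) ≤ ∑ j ∈ t, g j := by
  classical
  rw [← sum_image he]
  exact sum_le_sum_of_subset_of_nonneg (image_subset_iff.2 hest) fun j hj _ ↦ hg j hj

section Icc

variable {M : Type*} [AddCommMonoid M] [PartialOrder M] [IsOrderedAddMonoid M]
  {g : ℕ → M} {k : ℕ}

theorem sum_Icc_comp_mul_le (hg : ∀ n, 0 ≤ g n) (hk : 0 < k) (N : ℕ) :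
    ∑ n ∈ Icc 1 (N / k), g (k * n) ≤ ∑ n ∈ Icc 1 N, g n := by
  refine sum_comp_le_sum_of_injOn (k * ·) (fun a _ b _ h ↦ Nat.eq_of_mul_eq_mul_left hk h)
    (fun n hn ↦ ?_) fun j _ ↦ hg j
  simp only [coe_Icc, Set.mem_Icc] at hn ⊢
  exact ⟨Nat.mul_pos hk hn.1, (Nat.mul_le_mul_left k hn.2).trans (Nat.mul_div_le N k)⟩

theorem sum_Icc_ite_dvd_div_le (hg : ∀ n, 0 ≤ g n) (hk : 0 < k) (N : ℕ) :
    ∑ n ∈ Icc 1 N, (if k ∣ n then g (n / k) else 0) ≤ ∑ n ∈ Icc 1 N, g n := by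
  rw [← sum_filter]
  refine sum_comp_le_sum_of_injOn (· / k) (fun a ha b hb h ↦ ?_) (fun n hn ↦ ?_)
    fun j _ ↦ hg j
  · simp only [coe_filter, Set.mem_ofPred_eq] at ha hb
    exact (Nat.div_left_inj ha.2 hb.2).1 h
  · simp only [coe_filter, mem_Icc, Set.mem_ofPred_eq, coe_Icc, Set.mem_Icc] at hn ⊢
    exact ⟨Nat.div_pos (Nat.le_of_dvd hn.1.1 hn.2) hk, (Nat.div_le_self _ _).trans hn.1.2⟩

end Icc

theorem sq_add_two_mul_add_le {R : Type*} [CommRing R] [LinearOrder R] [IsStrictOrderedRing R]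
    (a b c : R) : (a + 2 * b + c) ^ 2 ≤ 4 * (a ^ 2 + 2 * b ^ 2 + c ^ 2) := by
  nlinarith [sq_nonneg (a - b), sq_nonneg (b - c), sq_nonneg (a - c)]

theorem le_two_div_rpow_of_pow_four_mul_le {a c : ℝ} (hc : 0 < c)
    (h : a ^ 4 * c ≤ 16) : a ≤ 2 / c ^ (1 / 4 : ℝ) := by
  rw [le_div_iff₀ (by positivity)]
  refine le_of_pow_le_pow_left₀ (n := 4) (by norm_num) (by norm_num) ?_
  rw [mul_pow, ← Real.rpow_natCast (c ^ (1 / 4 : ℝ)), ← Real.rpow_mul hc.le]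
  norm_num
  linarith

namespace HeckeMult

variable {f : ℕ → ℂ} (hf : HeckeMult f) {p : ℕ} (hp : p.Prime)
include hf hp

theorem mul_prime {n : ℕ} (hn : 0 < n) :
    f p * f n = f (p * n) + if p ∣ n then f (n / p) else 0 := by
  rw [hf.2 p n hp.pos hn]
  split_ifs with h
  · rw [Nat.gcd_eq_left h, hp.divisors, sum_pair hp.one_lt.ne, one_pow, Nat.div_one, sq,
      Nat.mul_div_mul_left _ _ hp.pos]
  · rw [(hp.coprime_iff_not_dvd.2 h).gcd_eq_one, Nat.divisors_one, sum_singleton, one_pow,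
      Nat.div_one, add_zero]

theorem mul_prime_mul (n : ℕ) (hn : 0 < n) : f p * f (p * n) = f (p ^ 2 * n) + f n := by
  rw [hf.mul_prime hp (Nat.mul_pos hp.pos hn), if_pos (dvd_mul_right p n), ← mul_assoc, ← sq,
    Nat.mul_div_cancel_left _ hp.pos]

theorem sq_prime_mul (n : ℕ) (hn : 0 < n) :
    f p ^ 2 * f n = f (p ^ 2 * n) + f n + (if p ∣ n then f n else 0) +
      if p ^ 2 ∣ n then f (n / p ^ 2) else 0 := by
  rw [sq, mul_assoc, hf.mul_prime hp hn, mul_add, hf.mul_prime_mul hp n hn]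
  by_cases hpn : p ∣ n
  · obtain ⟨m, rfl⟩ := hpn
    have hm : 0 < m := Nat.pos_of_mul_pos_left hn
    simp only [if_pos (dvd_mul_right p m), Nat.mul_div_cancel_left m hp.pos, hf.mul_prime hp hm,
      sq, Nat.mul_dvd_mul_iff_left hp.pos, Nat.mul_div_mul_left _ _ hp.pos]
    ring
  · have hp2n : ¬p ^ 2 ∣ n := fun h ↦ hpn ((dvd_pow_self p two_ne_zero).trans h)
    simp only [if_neg hpn, if_neg hp2n, mul_zero, add_zero]

theorem norm_prime_sq_mul_le (n : ℕ) (hn : 0 < n) :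
    ‖f p‖ ^ 2 * ‖f n‖ ≤
      ‖f (p ^ 2 * n)‖ + 2 * ‖f n‖ + ‖if p ^ 2 ∣ n then f (n / p ^ 2) else 0‖ := by
  have hdiv : ‖if p ∣ n then f n else 0‖ ≤ ‖f n‖ := by split_ifs <;> simp
  calc ‖f p‖ ^ 2 * ‖f n‖ = ‖f p ^ 2 * f n‖ := by rw [norm_mul, norm_pow]
    _ ≤ ‖f (p ^ 2 * n)‖ + ‖f n‖ + ‖if p ∣ n then f n else 0‖ +
          ‖if p ^ 2 ∣ n then f (n / p ^ 2) else 0‖ := by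
      rw [hf.sq_prime_mul hp n hn]
      exact norm_add₄_le
    _ ≤ _ := by linarith

theorem norm_prime_pow_four_mul_sq_le (n : ℕ) (hn : 0 < n) :
    ‖f p‖ ^ 4 * ‖f n‖ ^ 2 ≤
      4 * (‖f (p ^ 2 * n)‖ ^ 2 + 2 * ‖f n‖ ^ 2 +
        if p ^ 2 ∣ n then ‖f (n / p ^ 2)‖ ^ 2 else 0) := by
  have hsq : ‖if p ^ 2 ∣ n then f (n / p ^ 2) else 0‖ ^ 2 =
      if p ^ 2 ∣ n then ‖f (n / p ^ 2)‖ ^ 2 else 0 := by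
    split_ifs <;> simp
  calc ‖f p‖ ^ 4 * ‖f n‖ ^ 2 = (‖f p‖ ^ 2 * ‖f n‖) ^ 2 := by ring
    _ ≤ _ := pow_le_pow_left₀ (by positivity) (hf.norm_prime_sq_mul_le hp n hn) 2
    _ ≤ _ := sq_add_two_mul_add_le _ _ _
    _ = _ := by rw [hsq]

theorem norm_prime_pow_four_mul_sum_le (M : ℕ) :
    ‖f p‖ ^ 4 * ∑ n ∈ Icc 1 (M / p ^ 2), ‖f n‖ ^ 2 ≤
      16 * ∑ n ∈ Icc 1 M, ‖f n‖ ^ 2 := by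
  set S := ∑ n ∈ Icc 1 M, ‖f n‖ ^ 2
  have hsq_nonneg : ∀ n, 0 ≤ ‖f n‖ ^ 2 := fun n ↦ by positivity
  have hp2 : 0 < p ^ 2 := pow_pos hp.pos 2
  have hmul : ∑ n ∈ Icc 1 (M / p ^ 2), ‖f (p ^ 2 * n)‖ ^ 2 ≤ S :=
    sum_Icc_comp_mul_le hsq_nonneg hp2 M
  have hself : ∑ n ∈ Icc 1 (M / p ^ 2), ‖f n‖ ^ 2 ≤ S :=
    sum_le_sum_of_subset_of_nonneg (Icc_subset_Icc_right (Nat.div_le_self M _))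
      fun n _ _ ↦ hsq_nonneg n
  have hdiv :
      ∑ n ∈ Icc 1 (M / p ^ 2), (if p ^ 2 ∣ n then ‖f (n / p ^ 2)‖ ^ 2 else 0) ≤ S :=
    (sum_Icc_ite_dvd_div_le hsq_nonneg hp2 _).trans hself
  calc ‖f p‖ ^ 4 * ∑ n ∈ Icc 1 (M / p ^ 2), ‖f n‖ ^ 2
      = ∑ n ∈ Icc 1 (M / p ^ 2), ‖f p‖ ^ 4 * ‖f n‖ ^ 2 := mul_sum _ _ _
    _ ≤ ∑ n ∈ Icc 1 (M / p ^ 2), 4 * (‖f (p ^ 2 * n)‖ ^ 2 + 2 * ‖f n‖ ^ 2 +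
          if p ^ 2 ∣ n then ‖f (n / p ^ 2)‖ ^ 2 else 0) :=
      sum_le_sum fun n hn ↦ hf.norm_prime_pow_four_mul_sq_le hp n (mem_Icc.1 hn).1
    _ = 4 * (∑ n ∈ Icc 1 (M / p ^ 2), ‖f (p ^ 2 * n)‖ ^ 2 +
          2 * ∑ n ∈ Icc 1 (M / p ^ 2), ‖f n‖ ^ 2 +
          ∑ n ∈ Icc 1 (M / p ^ 2), if p ^ 2 ∣ n then ‖f (n / p ^ 2)‖ ^ 2 else 0) := by
      rw [← mul_sum, sum_add_distrib, sum_add_distrib, ← mul_sum]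
    _ ≤ 16 * S := by linarith

end HeckeMult

theorem hecke_fp_F_bound_general (f : ℕ → ℂ) (hf : HeckeMult f) (x : ℝ)
    (p : ℕ) (hp : p.Prime)
    (F : ℝ → ℝ)
    (hF : ∀ y : ℝ, F y = (∑ n ∈ Finset.Icc 1 ⌊x / y⌋₊, ‖f n‖ ^ 2) /
      (∑ n ∈ Finset.Icc 1 ⌊x⌋₊, ‖f n‖ ^ 2))
    (hFpos : 0 < F ((p : ℝ) ^ 2)) :
    ‖f p‖ ≤ 2 / (F ((p : ℝ) ^ 2)) ^ ((1 : ℝ) / 4) := by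
  have hfloor : ⌊x / (p : ℝ) ^ 2⌋₊ = ⌊x⌋₊ / p ^ 2 := by
    exact_mod_cast Nat.floor_div_natCast x (p ^ 2)
  refine le_two_div_rpow_of_pow_four_mul_le hFpos ?_
  rw [hF, hfloor, mul_div_assoc']
  exact div_le_of_le_mul₀ (sum_nonneg fun n _ ↦ by positivity) (by norm_num)
    (hf.norm_prime_pow_four_mul_sum_le hp _)

theorem hecke_fp_F_bound (f : ℕ → ℂ) (hf : HeckeMult f) (x : ℝ) (hx : 1 ≤ x)
    (p : ℕ) (hp : p.Prime) (hpx : (p : ℝ) ≤ Real.sqrt x)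
    (F : ℝ → ℝ)
    (hF : ∀ y : ℝ, F y = (∑ n ∈ Finset.Icc 1 ⌊x / y⌋₊, ‖f n‖ ^ 2) /
      (∑ n ∈ Finset.Icc 1 ⌊x⌋₊, ‖f n‖ ^ 2))
    (htot : 0 < ∑ n ∈ Finset.Icc 1 ⌊x⌋₊, ‖f n‖ ^ 2)
    (hFpos : 0 < F ((p : ℝ) ^ 2)) :
    ‖f p‖ ≤ 2 / (F ((p : ℝ) ^ 2)) ^ ((1 : ℝ) / 4) :=
  hecke_fp_F_bound_general f hf x p hp F hF hFpos
end

section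
/- Let f be a Hecke-multiplicative function, x ≥ 1 real, d a squarefree positive integer, and y ≥ 1 with yd ≤ x. Then Σ_{n ≤ x/y, d | n} |f(n)|² ≤ τ(d) · (∏_{p | d} (1 + |f(p)|²)) · F(yd) · Σ_{n ≤ x} |f(n)|², where F(t) = (Σ_{n ≤ x/t} |f(n)|²)/(Σ_{n ≤ x} |f(n)|²). -/
/-!
Möbius inversion of the Hecke relation gives `f (d m) = ∑_{e ∣ (d, m)} μ(e) f(d/e) f(m/e)`.
By Cauchy–Schwarz, `|f (d m)|² ≤ τ(d) ∑_{e ∣ (d, m)} |f(d/e)|² |f(m/e)|²`; summing over `m ≤ x/(yd)`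
and writing `m = e k` bounds the left side by `τ(d) (∑_{e ∣ d} |f e|²) ∑_{k ≤ x/(yd)} |f k|²`.
Since `|f|²` is multiplicative and `d` is squarefree, `∑_{e ∣ d} |f e|² = ∏_{p ∣ d} (1 + |f p|²)`.
-/

open Finset

open ArithmeticFunction
open scoped ArithmeticFunction.Moebius

variable {R : Type*}

theorem Nat.sum_Icc_filter_dvd [AddCommMonoid R] (g : ℕ → R) {N d : ℕ} (hd : 0 < d) :
    ∑ n ∈ Icc 1 N with d ∣ n, g n = ∑ m ∈ Icc 1 (N / d), g (d * m) := by
  refine sum_nbij' (· / d) (d * ·) ?_ ?_ ?_ ?_ ?_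
  · simp only [mem_filter, mem_Icc, and_imp]
    rintro n hn1 hnN ⟨k, rfl⟩
    rw [Nat.mul_div_cancel_left k hd]
    exact ⟨Nat.pos_of_mul_pos_left hn1, (Nat.le_div_iff_mul_le hd).2 (by rwa [mul_comm])⟩
  · simp only [mem_filter, mem_Icc, and_imp]
    intro m hm1 hmN
    refine ⟨⟨Nat.mul_pos hd hm1, ?_⟩, dvd_mul_right d m⟩
    rw [mul_comm]
    exact (Nat.le_div_iff_mul_le hd).1 hmN
  · intro n hn
    exact Nat.mul_div_cancel' (mem_filter.1 hn).2
  · intro m _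
    exact Nat.mul_div_cancel_left m hd
  · intro n hn
    rw [Nat.mul_div_cancel' (mem_filter.1 hn).2]

theorem Nat.sum_divisors_div_mul [AddCommMonoid R] (h : ℕ → R) {g e : ℕ} (hg : g ≠ 0)
    (he : e ∣ g) : ∑ c ∈ (g / e).divisors, h (e * c) = ∑ k ∈ g.divisors with e ∣ k, h k := by
  have he0 : 0 < e := Nat.pos_of_dvd_of_pos he (Nat.pos_of_ne_zero hg)
  refine sum_nbij' (e * ·) (· / e) ?_ ?_ ?_ ?_ (fun _ _ => rfl)
  · intro c hc
    simp only [Nat.mem_divisors, mem_filter] at hc ⊢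
    exact ⟨⟨(Nat.dvd_div_iff_mul_dvd he).1 hc.1, hg⟩, dvd_mul_right e c⟩
  · intro k hk
    simp only [Nat.mem_divisors, mem_filter] at hk ⊢
    exact ⟨Nat.div_dvd_div hk.2 hk.1.1, (Nat.div_pos (Nat.le_of_dvd (Nat.pos_of_ne_zero hg) he)
      he0).ne'⟩
  · intro c _
    exact Nat.mul_div_cancel_left c he0
  · intro k hk
    exact Nat.mul_div_cancel' (mem_filter.1 hk).2

theorem ArithmeticFunction.sum_divisors_moebius [Ring R] (k : ℕ) :
    ∑ e ∈ k.divisors, (μ e : R) = if k = 1 then 1 else 0 := by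
  have h := congrArg (· k) (coe_moebius_mul_coe_zeta (R := R))
  simp only [coe_mul_zeta_apply, intCoe_apply, one_apply] at h
  exact h

theorem ArithmeticFunction.sum_divisors_moebius_mul_sum_divisors_div [Ring R] (h : ℕ → R)
    {g : ℕ} (hg : g ≠ 0) :
    ∑ e ∈ g.divisors, (μ e : R) * ∑ c ∈ (g / e).divisors, h (e * c) = h 1 := by
  calc _ = ∑ e ∈ g.divisors, ∑ k ∈ g.divisors, if e ∣ k then (μ e : R) * h k else 0 := by
        refine sum_congr rfl fun e he => ?_
        rw [Nat.sum_divisors_div_mul h hg (Nat.dvd_of_mem_divisors he), mul_sum, sum_filter]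
    _ = ∑ k ∈ g.divisors, (∑ e ∈ k.divisors, (μ e : R)) * h k := by
        rw [sum_comm]
        refine sum_congr rfl fun k hk => ?_
        rw [sum_mul, ← Nat.divisors_filter_dvd_of_dvd hg (Nat.dvd_of_mem_divisors hk), sum_filter]
    _ = h 1 := by
        simp [sum_divisors_moebius, Nat.one_mem_divisors.2 hg]

namespace HeckeMult

variable {f : ℕ → ℂ}

theorem map_mul_eq_sum_moebius (hf : HeckeMult f) {m n : ℕ} (hm : 0 < m) (hn : 0 < n) :
    f (m * n) = ∑ e ∈ (m.gcd n).divisors, (μ e : ℂ) * (f (m / e) * f (n / e)) := by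
  have hg : m.gcd n ≠ 0 := (Nat.gcd_pos_of_pos_left n hm).ne'
  symm
  calc _ = ∑ e ∈ (m.gcd n).divisors,
        (μ e : ℂ) * ∑ c ∈ (m.gcd n / e).divisors, f (m * n / (e * c) ^ 2) := by
        refine sum_congr rfl fun e he => ?_
        obtain ⟨hem, hen⟩ := Nat.dvd_gcd_iff.1 (Nat.dvd_of_mem_divisors he)
        have he0 := Nat.pos_of_mem_divisors he
        rw [hf.2 _ _ (Nat.div_pos (Nat.le_of_dvd hm hem) he0)
          (Nat.div_pos (Nat.le_of_dvd hn hen) he0), Nat.gcd_div hem hen]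
        congr 1
        refine sum_congr rfl fun c _ => ?_
        rw [Nat.div_mul_div_comm hem hen, Nat.div_div_eq_div_mul, mul_pow, sq e]
    _ = f (m * n) := by
        rw [sum_divisors_moebius_mul_sum_divisors_div (fun k => f (m * n / k ^ 2)) hg]
        simp

theorem map_mul_of_coprime (hf : HeckeMult f) {m n : ℕ} (hm : 0 < m) (hn : 0 < n)
    (h : m.Coprime n) : f (m * n) = f m * f n := by
  simp [hf.2 m n hm hn, Nat.Coprime.gcd_eq_one h]

theorem sum_divisors_norm_sq_eq_prod (hf : HeckeMult f) {d : ℕ} (hd : Squarefree d) :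
    ∑ e ∈ d.divisors, ‖f e‖ ^ 2 = ∏ p ∈ d.primeFactors, (1 + ‖f p‖ ^ 2) := by
  let g : ArithmeticFunction ℝ := ⟨fun n => if n = 0 then 0 else ‖f n‖ ^ 2, if_pos rfl⟩
  have hg {n : ℕ} (hn : n ≠ 0) : g n = ‖f n‖ ^ 2 := if_neg hn
  have hmult : g.IsMultiplicative := by
    refine ⟨by simp [hg, hf.1], fun {m n} hmn => ?_⟩
    rcases m.eq_zero_or_pos with rfl | hm
    · simp [g]
    rcases n.eq_zero_or_pos with rfl | hn
    · simp [g]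
    rw [hg (Nat.mul_pos hm hn).ne', hg hm.ne', hg hn.ne', hf.map_mul_of_coprime hm hn hmn,
      norm_mul, mul_pow]
  calc _ = ∑ e ∈ d.divisors, g e :=
        sum_congr rfl fun e he => (hg (Nat.pos_of_mem_divisors he).ne').symm
    _ = ∏ p ∈ d.primeFactors, (1 + g p) := (hmult.prodPrimeFactors_one_add_of_squarefree hd).symm
    _ = _ := prod_congr rfl fun p hp => by rw [hg (Nat.prime_of_mem_primeFactors hp).ne_zero]

theorem norm_map_mul_le (hf : HeckeMult f) {m n : ℕ} (hm : 0 < m) (hn : 0 < n) :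
    ‖f (m * n)‖ ≤ ∑ e ∈ (m.gcd n).divisors, ‖f (m / e)‖ * ‖f (n / e)‖ := by
  rw [hf.map_mul_eq_sum_moebius hm hn]
  refine (norm_sum_le _ _).trans (sum_le_sum fun e _ => ?_)
  have hμ : ‖(μ e : ℂ)‖ ≤ 1 := by
    rw [Complex.norm_intCast]
    exact_mod_cast abs_moebius_le_one
  rw [norm_mul, norm_mul]
  exact mul_le_of_le_one_left (by positivity) hμ

theorem norm_sq_map_mul_le (hf : HeckeMult f) {d m : ℕ} (hd : 0 < d) (hm : 0 < m) :
    ‖f (d * m)‖ ^ 2 ≤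
      #d.divisors * ∑ e ∈ (d.gcd m).divisors, ‖f (d / e)‖ ^ 2 * ‖f (m / e)‖ ^ 2 := by
  have hcard : (#(d.gcd m).divisors : ℝ) ≤ #d.divisors := by
    exact_mod_cast card_le_card (Nat.divisors_subset_of_dvd hd.ne' (Nat.gcd_dvd_left d m))
  calc ‖f (d * m)‖ ^ 2 ≤ (∑ e ∈ (d.gcd m).divisors, ‖f (d / e)‖ * ‖f (m / e)‖) ^ 2 := by
        gcongr
        exact hf.norm_map_mul_le hd hm
    _ ≤ #(d.gcd m).divisors * ∑ e ∈ (d.gcd m).divisors, (‖f (d / e)‖ * ‖f (m / e)‖) ^ 2 :=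
        sq_sum_le_card_mul_sum_sq
    _ ≤ _ := by
        simp_rw [mul_pow]
        gcongr

theorem sum_norm_sq_map_mul_le (hf : HeckeMult f) {d : ℕ} (hd : 0 < d) (M : ℕ) :
    ∑ m ∈ Icc 1 M, ‖f (d * m)‖ ^ 2 ≤
      #d.divisors * (∑ e ∈ d.divisors, ‖f e‖ ^ 2) * ∑ k ∈ Icc 1 M, ‖f k‖ ^ 2 := by
  have hswap (m e : ℕ) : m ∈ Icc 1 M ∧ e ∈ (d.gcd m).divisors ↔
      m ∈ {m ∈ Icc 1 M | e ∣ m} ∧ e ∈ d.divisors := by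
    simp only [Nat.mem_divisors, mem_filter, Nat.dvd_gcd_iff, ne_eq, Nat.gcd_eq_zero_iff,
      hd.ne', false_and, not_false_eq_true, and_true]
    tauto
  calc _ ≤ ∑ m ∈ Icc 1 M, #d.divisors *
        ∑ e ∈ (d.gcd m).divisors, ‖f (d / e)‖ ^ 2 * ‖f (m / e)‖ ^ 2 :=
        sum_le_sum fun m hm => hf.norm_sq_map_mul_le hd (mem_Icc.1 hm).1
    _ = #d.divisors * ∑ e ∈ d.divisors, ‖f (d / e)‖ ^ 2 * ∑ k ∈ Icc 1 (M / e), ‖f k‖ ^ 2 := by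
        rw [← mul_sum, sum_comm' hswap]
        refine congrArg _ (sum_congr rfl fun e he => ?_)
        rw [← mul_sum, Nat.sum_Icc_filter_dvd _ (Nat.pos_of_mem_divisors he)]
        simp only [Nat.mul_div_cancel_left _ (Nat.pos_of_mem_divisors he)]
    _ ≤ #d.divisors * ∑ e ∈ d.divisors, ‖f (d / e)‖ ^ 2 * ∑ k ∈ Icc 1 M, ‖f k‖ ^ 2 := by
        gcongr with e
        exact Nat.div_le_self M e
    _ = _ := by
        rw [← sum_mul, Nat.sum_div_divisors d (fun e => ‖f e‖ ^ 2), mul_assoc]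

end HeckeMult

theorem hecke_sum_div_d_general (f : ℕ → ℂ) (hf : HeckeMult f) (x y : ℝ)
    (d : ℕ) (hd : Squarefree d)
    (htot : 0 < ∑ n ∈ Finset.Icc 1 ⌊x⌋₊, ‖f n‖ ^ 2)
    (F : ℝ → ℝ)
    (hF : ∀ t : ℝ, F t = (∑ n ∈ Finset.Icc 1 ⌊x / t⌋₊, ‖f n‖ ^ 2) /
      (∑ n ∈ Finset.Icc 1 ⌊x⌋₊, ‖f n‖ ^ 2)) :
    ∑ n ∈ (Finset.Icc 1 ⌊x / y⌋₊).filter (fun n => d ∣ n), ‖f n‖ ^ 2 ≤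
      (d.divisors.card : ℝ) * (∏ p ∈ d.primeFactors, (1 + ‖f p‖ ^ 2)) *
        F (y * d) * ∑ n ∈ Finset.Icc 1 ⌊x⌋₊, ‖f n‖ ^ 2 := by
  have hd0 : 0 < d := Nat.pos_of_ne_zero hd.ne_zero
  have hfloor : ⌊x / y⌋₊ / d = ⌊x / (y * d)⌋₊ := by
    rw [← div_div, Nat.floor_div_natCast]
  rw [Nat.sum_Icc_filter_dvd _ hd0, hfloor, mul_assoc _ (F _), hF, div_mul_cancel₀ _ htot.ne',
    ← hf.sum_divisors_norm_sq_eq_prod hd]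
  exact hf.sum_norm_sq_map_mul_le hd0 _

theorem hecke_sum_div_d (f : ℕ → ℂ) (hf : HeckeMult f) (x y : ℝ) (hx : 1 ≤ x)
    (hy : 1 ≤ y) (d : ℕ) (hd : Squarefree d) (hyd : y * d ≤ x)
    (htot : 0 < ∑ n ∈ Finset.Icc 1 ⌊x⌋₊, ‖f n‖ ^ 2)
    (F : ℝ → ℝ)
    (hF : ∀ t : ℝ, F t = (∑ n ∈ Finset.Icc 1 ⌊x / t⌋₊, ‖f n‖ ^ 2) /
      (∑ n ∈ Finset.Icc 1 ⌊x⌋₊, ‖f n‖ ^ 2)) :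
    ∑ n ∈ (Finset.Icc 1 ⌊x / y⌋₊).filter (fun n => d ∣ n), ‖f n‖ ^ 2 ≤
      (d.divisors.card : ℝ) * (∏ p ∈ d.primeFactors, (1 + ‖f p‖ ^ 2)) *
        F (y * d) * ∑ n ∈ Finset.Icc 1 ⌊x⌋₊, ‖f n‖ ^ 2 :=
  hecke_sum_div_d_general f hf x y d hd htot F hF
end
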